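/- Let R be a commutative ring, 𝔞 an ideal, and M, N R-modules. If Hom_R(M/𝔞M, N) ≅ Hom_R(M/𝔞²M, N) via the map induced by the projection M/𝔞²M → M/𝔞M, then 𝔞 · Γ_𝔞(M,N) = 0, where Γ_𝔞(M,N) = colim_k Hom_R(M/𝔞^k M, N). -/
import Mathlib


open TensorProduct

/-- The projection `M ⧸ 𝔞^l M → M ⧸ 𝔞^k M` for `k ≤ l`. -/
def quotPowProj {R : Type*} [CommRing R] (𝔞 : Ideal R) (M : Type*) [AddCommGroup M]
    [Module R M] (k l : ℕ) (h : k ≤ l) :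
    (M ⧸ ((𝔞 ^ l) • ⊤ : Submodule R M)) →ₗ[R] (M ⧸ ((𝔞 ^ k) • ⊤ : Submodule R M)) :=
  Submodule.mapQ _ _ LinearMap.id
    (by simpa using Submodule.smul_mono_left (Ideal.pow_le_pow_right h))

theorem lemA {R : Type*} [CommRing R] (𝔞 : Ideal R)
    (M N : Type*) [AddCommGroup M] [Module R M] [AddCommGroup N] [Module R N]
    (h : Function.Surjective
      (fun φ : (M ⧸ ((𝔞 ^ 1) • ⊤ : Submodule R M)) →ₗ[R] N =>
        φ.comp (quotPowProj 𝔞 M 1 2 one_le_two)))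
    (ψ : M →ₗ[R] N) (hψ : ∀ x ∈ ((𝔞 ^ 2) • ⊤ : Submodule R M), ψ x = 0) :
    ∀ x ∈ ((𝔞 ^ 1) • ⊤ : Submodule R M), ψ x = 0 := by
  set ψ' : (M ⧸ ((𝔞 ^ 2) • ⊤ : Submodule R M)) →ₗ[R] N :=
    Submodule.liftQ _ ψ (fun x hx => hψ x hx)
  obtain ⟨φ, hφ⟩ := h ψ'
  intro x hx
  have : ψ x = ψ' (Submodule.Quotient.mk x) := rfl
  rw [this, ← hφ]
  have : (quotPowProj 𝔞 M 1 2 one_le_two) (Submodule.Quotient.mk x)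
      = Submodule.Quotient.mk x := by
    simp [quotPowProj, Submodule.mapQ_apply]
  simp only [LinearMap.comp_apply, this]
  rw [(Submodule.Quotient.mk_eq_zero _).2 hx, map_zero]

theorem lemB {R : Type*} [CommRing R] (𝔞 : Ideal R)
    (M N : Type*) [AddCommGroup M] [Module R M] [AddCommGroup N] [Module R N]
    (h : Function.Surjective
      (fun φ : (M ⧸ ((𝔞 ^ 1) • ⊤ : Submodule R M)) →ₗ[R] N =>
        φ.comp (quotPowProj 𝔞 M 1 2 one_le_two))) :
    ∀ k : ℕ, ∀ ψ : M →ₗ[R] N, (∀ x ∈ ((𝔞 ^ (k+1)) • ⊤ : Submodule R M), ψ x = 0) →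
      ∀ x ∈ ((𝔞 ^ 1) • ⊤ : Submodule R M), ψ x = 0 := by
  intro k
  induction k with
  | zero => intro ψ hψ; exact hψ
  | succ k ih =>
    intro ψ hψ
    refine ih ψ ?_
    -- show ψ kills 𝔞^(k+1) M given it kills 𝔞^(k+2) M
    intro x hx
    refine Submodule.smul_induction_on hx ?_ (fun y z hy hz => by rw [map_add, hy, hz, add_zero])
    intro r hr m _
    -- r ∈ 𝔞^(k+1) = 𝔞^k * 𝔞
    have hr' : r ∈ 𝔞 ^ k * 𝔞 := by rwa [← pow_succ]
    refine Submodule.mul_induction_on hr' ?_ (fun y z hy hz => by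
      rw [add_smul, map_add, hy, hz, add_zero])
    intro c hc a ha
    -- ψ ((c*a) • m) = (ψ ∘ c•) (a • m), and ψ∘c• kills 𝔞²M
    have key : ∀ y ∈ ((𝔞 ^ 1) • ⊤ : Submodule R M), (ψ ∘ₗ LinearMap.lsmul R M c) y = 0 := by
      refine lemA 𝔞 M N h _ ?_
      intro y hy
      have hcy : c • y ∈ ((𝔞 ^ (k+2)) • ⊤ : Submodule R M) := by
        refine Submodule.smul_induction_on hy ?_ ?_
        · intro r hr n _
          rw [smul_smul]
          refine Submodule.smul_mem_smul ?_ Submodule.mem_top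
          have : c * r ∈ 𝔞 ^ k * 𝔞 ^ 2 := Ideal.mul_mem_mul hc hr
          rwa [← pow_add] at this
        · intro y z hy hz
          rw [smul_add]; exact Submodule.add_mem _ hy hz
      simpa using hψ (c • y) hcy
    have hm : a • m ∈ ((𝔞 ^ 1) • ⊤ : Submodule R M) := by
      rw [pow_one]; exact Submodule.smul_mem_smul ha Submodule.mem_top
    have := key (a • m) hm
    simpa [mul_smul, mul_comm c a] using this

/-- if the natural map `Hom(M/𝔞M, N) → Hom(M/𝔞²M, N)` (precomposition with
the projection) is an isomorphism, then `𝔞 · Γ_𝔞(M,N) = 0`. -/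
theorem ideal_smul_gammaGen_eq_zero {R : Type*} [CommRing R] (𝔞 : Ideal R)
    (M N : Type*) [AddCommGroup M] [Module R M] [AddCommGroup N] [Module R N]
    (h : Function.Bijective
      (fun φ : (M ⧸ ((𝔞 ^ 1) • ⊤ : Submodule R M)) →ₗ[R] N =>
        φ.comp (quotPowProj 𝔞 M 1 2 one_le_two))) :
    ∀ a ∈ 𝔞,
      ∀ x : Module.DirectLimit (fun k : ℕ => (M ⧸ ((𝔞 ^ k) • ⊤ : Submodule R M)) →ₗ[R] N)
          (fun k l h => LinearMap.lcomp R N (quotPowProj 𝔞 M k l h)),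
        a • x = 0 := by
  intro a ha x
  obtain ⟨k, φ, rfl⟩ := Module.DirectLimit.exists_of x
  rw [← map_smul, ← (map_zero (Module.DirectLimit.of R ℕ _ _ k))]
  congr 1
  -- show a • φ = 0 at level k
  cases k with
  | zero =>
    apply Submodule.linearMap_qext
    ext m
    have hm : Submodule.Quotient.mk m = (0 : M ⧸ ((𝔞 ^ 0) • ⊤ : Submodule R M)) := by
      rw [Submodule.Quotient.mk_eq_zero]; simp
    simp [hm]
  | succ k =>
    apply Submodule.linearMap_qext
    ext m
    have hψ : ∀ y ∈ ((𝔞 ^ (k+1)) • ⊤ : Submodule R M),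
        (φ ∘ₗ Submodule.mkQ _) y = 0 := by
      intro y hy
      simp [Submodule.Quotient.mk_eq_zero _ |>.2 hy]
    have := lemB 𝔞 M N h.2 k (φ ∘ₗ Submodule.mkQ _) hψ (a • m)
      (by rw [pow_one]; exact Submodule.smul_mem_smul ha Submodule.mem_top)
    simpa [Submodule.Quotient.mk_smul] using this
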